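/- Let R₀ ≥ 1, 0 < m < 1, and C₂ > 0. Suppose v : ℝ² → ℝ is twice continuously differentiable on {x : |x| ≥ R₀}, v(x) → 0 as |x| → ∞, and |Δv(x) − v(x)| ≤ C₂ e^{−2m|x|} for all |x| ≥ R₀. Then for every β with m < β < min{1, 2m} there exists a constant C₃ > 0 such that |v(x)| ≤ C₃ e^{−β|x|} for all |x| ≥ R₀. -/

import Mathlib

/-!
The barriers are plane waves `φ x = exp ⟪a, x⟫` with `‖a‖ ≤ β`: they satisfy `Δφ = ‖a‖² φ ≤ β² φ`
and dominate `exp (-β ‖x‖)`, so for `A` large `w = A φ ∓ v` satisfies `Δw ≤ w` and is nonnegative on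
the sphere `‖x‖ = R₀` and (up to `o(1)`) at infinity. At a negative minimum of `w` one would have
`0 ≤ Δw ≤ w < 0`, hence `±v ≤ A φ`; at a given `x` take `a = -β x / ‖x‖`. Unlike the radial
barrier `exp (-β r)`, plane waves are smooth everywhere and there is no `-β / r` term to control.
-/

open MeasureTheory Filter

/-- The Euclidean Laplacian on `ℝ²`: the sum of the two pure second partial derivatives. -/
noncomputable def lap2 (f : EuclideanSpace ℝ (Fin 2) → ℝ) (x : EuclideanSpace ℝ (Fin 2)) : ℝ :=
  ∑ i : Fin 2, iteratedFDeriv ℝ 2 f x ![EuclideanSpace.single i 1, EuclideanSpace.single i 1]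

open Topology Laplacian InnerProductSpace

theorem IsLocalMin.nonneg_of_hasDerivAt_deriv {g : ℝ → ℝ} {a c : ℝ} (hmin : IsLocalMin g a)
    (hg : ContinuousAt g a) (hc : HasDerivAt (deriv g) c a) : 0 ≤ c := by
  -- If `c < 0`, the second derivative test makes `a` a local maximum as well, so `g` is locally
  -- constant near `a` and its second derivative there is `0`.
  by_contra! hneg
  have hmax : IsLocalMax g a :=
    isLocalMax_of_deriv_deriv_neg (hc.deriv ▸ hneg) hmin.deriv_eq_zero hg
  have hconst : g =ᶠ[𝓝 a] fun _ => g a :=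
    (hmin.and hmax).mono fun _ hx => le_antisymm hx.2 hx.1
  have hzero : deriv (deriv g) a = 0 := by
    rw [hconst.deriv.deriv_eq]
    simp
  linarith [hc.deriv]

section
variable {E : Type*} [NormedAddCommGroup E] [NormedSpace ℝ E]

theorem IsLocalMin.iteratedFDeriv_two_nonneg {f : E → ℝ} {p : E} (hmin : IsLocalMin f p)
    (hf : ContDiffAt ℝ 2 f p) (e : E) : 0 ≤ iteratedFDeriv ℝ 2 f p ![e, e] := by
  set ℓ : ℝ → E := fun t => p + t • e
  have hℓ : ∀ t, HasDerivAt ℓ e t := fun t => by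
    simpa only [id, one_smul] using ((hasDerivAt_id t).smul_const e).const_add p
  have hℓ0 : ℓ 0 = p := by simp [ℓ]
  have hf' : ∀ᶠ t in 𝓝 (0 : ℝ), ContDiffAt ℝ 2 f (ℓ t) :=
    (hℓ 0).continuousAt.tendsto.eventually (hℓ0 ▸ hf.eventually (by simp))
  have hderiv : deriv (f ∘ ℓ) =ᶠ[𝓝 0] fun t => fderiv ℝ f (ℓ t) e := by
    filter_upwards [hf'] with t ht
    exact ((ht.differentiableAt two_ne_zero).hasFDerivAt.comp_hasDerivAt t (hℓ t)).deriv
  have hf2 : HasFDerivAt (fderiv ℝ f) (fderiv ℝ (fderiv ℝ f) p) (ℓ 0) :=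
    hℓ0 ▸ ((hf.fderiv_right le_rfl).differentiableAt one_ne_zero).hasFDerivAt
  have hdd : HasDerivAt (deriv (f ∘ ℓ)) (fderiv ℝ (fderiv ℝ f) p e e) 0 :=
    (((ContinuousLinearMap.apply ℝ ℝ e).hasFDerivAt.comp_hasDerivAt 0
      (hf2.comp_hasDerivAt 0 (hℓ 0)))).congr_of_eventuallyEq hderiv
  have hmin' : IsLocalMin (f ∘ ℓ) 0 := (hℓ0.symm ▸ hmin).comp_continuous (hℓ 0).continuousAt
  rw [iteratedFDeriv_two_apply]
  exact hmin'.nonneg_of_hasDerivAt_deriv (hf.continuousAt.comp_of_eq (hℓ 0).continuousAt hℓ0) hdd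
end

section
variable {E : Type*} [NormedAddCommGroup E] [InnerProductSpace ℝ E]

theorem hasFDerivAt_exp_inner (a x : E) :
    HasFDerivAt (fun y => Real.exp ⟪a, y⟫_ℝ) (Real.exp ⟪a, x⟫_ℝ • innerSL ℝ a) x :=
  (innerSL ℝ a).hasFDerivAt.exp

theorem iteratedFDeriv_two_exp_inner_apply (a x e : E) :
    iteratedFDeriv ℝ 2 (fun y => Real.exp ⟪a, y⟫_ℝ) x ![e, e]
      = ⟪a, e⟫_ℝ ^ 2 * Real.exp ⟪a, x⟫_ℝ := by
  have hfderiv : fderiv ℝ (fun y => Real.exp ⟪a, y⟫_ℝ) = fun y => Real.exp ⟪a, y⟫_ℝ • innerSL ℝ a :=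
    funext fun y => (hasFDerivAt_exp_inner a y).fderiv
  rw [iteratedFDeriv_two_apply, hfderiv,
    ((hasFDerivAt_exp_inner a x).smul_const (innerSL ℝ a)).fderiv]
  simp only [Matrix.cons_val_zero, Matrix.cons_val_one,
    ContinuousLinearMap.smulRight_apply, smul_apply, innerSL_apply_apply, smul_eq_mul]
  ring

theorem exp_neg_mul_norm_le_exp_inner {a : E} {β : ℝ} (ha : ‖a‖ ≤ β) (x : E) :
    Real.exp (-β * ‖x‖) ≤ Real.exp ⟪a, x⟫_ℝ := by
  have h : -(‖a‖ * ‖x‖) ≤ ⟪a, x⟫_ℝ := neg_le_of_abs_le (abs_real_inner_le_norm a x)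
  gcongr
  nlinarith [norm_nonneg x]

theorem exists_norm_le_and_inner_eq_neg_mul_norm {β : ℝ} (hβ : 0 ≤ β) (x : E) :
    ∃ a : E, ‖a‖ ≤ β ∧ ⟪a, x⟫_ℝ = -β * ‖x‖ := by
  refine ⟨(-β / ‖x‖) • x, ?_, ?_⟩ <;> rcases eq_or_ne ‖x‖ 0 with h | h
  · simp [h, hβ]
  · simp [norm_smul, abs_of_nonneg hβ, h]
  · simp [h]
  · simp only [real_inner_smul_left, real_inner_self_eq_norm_sq]
    field_simp

variable [FiniteDimensional ℝ E]

theorem IsLocalMin.laplacian_nonneg {f : E → ℝ} {p : E} (hmin : IsLocalMin f p)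
    (hf : ContDiffAt ℝ 2 f p) : 0 ≤ Δ f p := by
  rw [laplacian_eq_iteratedFDeriv_stdOrthonormalBasis]
  exact Finset.sum_nonneg fun i _ => hmin.iteratedFDeriv_two_nonneg hf _

theorem laplacian_exp_inner (a x : E) :
    Δ (fun y => Real.exp ⟪a, y⟫_ℝ) x = ‖a‖ ^ 2 * Real.exp ⟪a, x⟫_ℝ := by
  let b := stdOrthonormalBasis ℝ E
  have hparseval : ∑ i, ⟪a, b i⟫_ℝ ^ 2 = ‖a‖ ^ 2 := by
    simp_rw [sq, ← real_inner_self_eq_norm_mul_norm, ← b.sum_inner_mul_inner a a,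
      real_inner_comm a (b _)]
  rw [laplacian_eq_iteratedFDeriv_orthonormalBasis _ b]
  simp only [iteratedFDeriv_two_exp_inner_apply, ← Finset.sum_mul, hparseval]

theorem nonneg_of_laplacian_le_self {S : Set E} {w : E → ℝ} (hS : IsClosed S)
    (hw : ContDiffOn ℝ 2 w S) (hfrontier : ∀ x ∈ frontier S, 0 ≤ w x)
    (hinf : ∀ ε > 0, ∀ᶠ x in cocompact E, -ε ≤ w x)
    (hsub : ∀ x ∈ interior S, Δ w x ≤ w x) {x : E} (hx : x ∈ S) : 0 ≤ w x := by
  by_contra! hneg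
  obtain ⟨p, hpS, hpmin⟩ := hw.continuousOn.exists_isMinOn' hS hx <|
    ((hinf _ (neg_pos.2 hneg)).filter_mono inf_le_left).mono fun y hy => by linarith
  have hp : w p < 0 := (hpmin hx).trans_lt hneg
  have hpint : p ∈ interior S := by
    rw [← self_sdiff_frontier]
    exact ⟨hpS, fun h => (hfrontier p h).not_gt hp⟩
  have hnhds : S ∈ 𝓝 p := mem_interior_iff_mem_nhds.1 hpint
  have hΔ := IsLocalMin.laplacian_nonneg (hpmin.isLocalMin hnhds) (hw.contDiffAt hnhds)
  linarith [hsub p hpint]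

theorem le_mul_exp_inner_of_abs_laplacian_sub_le {R₀ β γ A C : ℝ} {v : E → ℝ} {a : E}
    (hv : ContDiffOn ℝ 2 v {x | R₀ ≤ ‖x‖}) (hlim : Tendsto v (cocompact E) (𝓝 0))
    (herr : ∀ x, R₀ ≤ ‖x‖ → |Δ v x - v x| ≤ C * Real.exp (-γ * ‖x‖))
    (hC : 0 ≤ C) (hβγ : β ≤ γ) (ha : ‖a‖ ≤ β) (hA : 0 ≤ A) (hAC : C ≤ A * (1 - β ^ 2))
    (hbdry : ∀ x, ‖x‖ = R₀ → v x ≤ A * Real.exp (-β * R₀)) {x : E} (hx : R₀ ≤ ‖x‖) :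
    v x ≤ A * Real.exp ⟪a, x⟫_ℝ := by
  set φ : E → ℝ := fun y => Real.exp ⟪a, y⟫_ℝ
  have hφ : ContDiff ℝ 2 φ := Real.contDiff_exp.comp (innerSL ℝ a).contDiff
  suffices 0 ≤ (A • φ - v) x by simpa [φ, sub_nonneg] using this
  refine nonneg_of_laplacian_le_self (w := A • φ - v) (isClosed_le continuous_const continuous_norm)
    ((hφ.contDiffOn.const_smul A).sub hv) (fun y hy => ?_) (fun ε hε => ?_) (fun y hy => ?_) hx
  · have hy : ‖y‖ = R₀ := (frontier_le_subset_eq continuous_const continuous_norm hy).symm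
    have : Real.exp (-β * R₀) ≤ φ y := hy ▸ exp_neg_mul_norm_le_exp_inner ha y
    show 0 ≤ A * φ y - v y
    nlinarith [hbdry y hy]
  · filter_upwards [hlim.eventually (eventually_lt_nhds hε)] with y hy
    show -ε ≤ A * φ y - v y
    nlinarith [(Real.exp_pos ⟪a, y⟫_ℝ).le]
  · have hyS : y ∈ {x : E | R₀ ≤ ‖x‖} := interior_subset hy
    have hvy : ContDiffAt ℝ 2 v y := hv.contDiffAt (mem_interior_iff_mem_nhds.1 hy)
    have hΔ : Δ (A • φ - v) y = A * (‖a‖ ^ 2 * φ y) - Δ v y := by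
      have hAφ : ContDiffAt ℝ 2 (A • φ) y := hφ.contDiffAt.const_smul A
      rw [hAφ.laplacian_sub hvy, laplacian_smul A hφ.contDiffAt, laplacian_exp_inner]
      rfl
    have hdecay : Real.exp (-γ * ‖y‖) ≤ φ y :=
      (Real.exp_le_exp.2 (by nlinarith [norm_nonneg y])).trans (exp_neg_mul_norm_le_exp_inner ha y)
    have hsq : ‖a‖ ^ 2 ≤ β ^ 2 := pow_le_pow_left₀ (norm_nonneg a) ha 2
    have hφy : 0 < φ y := Real.exp_pos _
    have herr' : -(Δ v y - v y) ≤ C * φ y :=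
      (neg_le_abs _).trans ((herr y hyS).trans (mul_le_mul_of_nonneg_left hdecay hC))
    have hlap : A * (‖a‖ ^ 2 * φ y) ≤ A * (β ^ 2 * φ y) := by gcongr
    rw [hΔ]
    show _ ≤ A * φ y - v y
    linarith [mul_le_mul_of_nonneg_right hAC hφy.le]

theorem exists_abs_le_mul_exp_of_abs_laplacian_sub_le {R₀ β γ C : ℝ} {v : E → ℝ}
    (hv : ContDiffOn ℝ 2 v {x | R₀ ≤ ‖x‖}) (hlim : Tendsto v (cocompact E) (𝓝 0))
    (herr : ∀ x, R₀ ≤ ‖x‖ → |Δ v x - v x| ≤ C * Real.exp (-γ * ‖x‖))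
    (hC : 0 ≤ C) (hβ : 0 ≤ β) (hβ1 : β < 1) (hβγ : β ≤ γ) :
    ∃ K > 0, ∀ x, R₀ ≤ ‖x‖ → |v x| ≤ K * Real.exp (-β * ‖x‖) := by
  obtain ⟨M, hM⟩ := (isCompact_sphere (0 : E) R₀).exists_bound_of_continuousOn
    (hv.continuousOn.mono fun x hx => (mem_sphere_zero_iff_norm.1 hx).ge)
  have hβ2 : 0 < 1 - β ^ 2 := by nlinarith
  set K := max 1 (max (C / (1 - β ^ 2)) (M * Real.exp (β * R₀)))
  have hK : 0 < K := lt_max_of_lt_left one_pos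
  have hKC : C ≤ K * (1 - β ^ 2) :=
    (div_le_iff₀ hβ2).1 ((le_max_left _ _).trans (le_max_right _ _))
  have hKM : M ≤ K * Real.exp (-β * R₀) := by
    have h : M * Real.exp (β * R₀) ≤ K := (le_max_right _ _).trans (le_max_right _ _)
    calc M = M * Real.exp (β * R₀) * Real.exp (-β * R₀) := by
          rw [mul_assoc, ← Real.exp_add, neg_mul, add_neg_cancel, Real.exp_zero, mul_one]
      _ ≤ K * Real.exp (-β * R₀) := by gcongr
  have hbdry (w : E → ℝ) (hw : ∀ x, ‖x‖ = R₀ → w x ≤ |v x|) :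
      ∀ x, ‖x‖ = R₀ → w x ≤ K * Real.exp (-β * R₀) := fun x hx =>
    (hw x hx).trans ((hM x (mem_sphere_zero_iff_norm.2 hx)).trans hKM)
  refine ⟨K, hK, fun x hx => ?_⟩
  obtain ⟨a, ha, hax⟩ := exists_norm_le_and_inner_eq_neg_mul_norm hβ x
  have hupper := le_mul_exp_inner_of_abs_laplacian_sub_le hv hlim herr hC hβγ ha hK.le hKC
    (hbdry v fun x _ => le_abs_self (v x)) hx
  have hlower := le_mul_exp_inner_of_abs_laplacian_sub_le (v := -v) hv.neg
    (by rw [← neg_zero]; exact hlim.neg)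
    (fun x hx => by
      rw [laplacian_neg, Pi.neg_apply, Pi.neg_apply, neg_sub_neg, abs_sub_comm]
      exact herr x hx)
    hC hβγ ha hK.le hKC (hbdry (-v) fun x _ => neg_le_abs (v x)) hx
  rw [hax] at hupper hlower
  exact abs_le.2 ⟨by simpa [neg_le] using hlower, hupper⟩

end

theorem lap2_eq_laplacian : lap2 = Δ := by
  ext f x
  simp [lap2, laplacian_eq_iteratedFDeriv_orthonormalBasis f (EuclideanSpace.basisFun (Fin 2) ℝ)]

theorem stmt_4_general (R₀ m C₂ : ℝ) (hm0 : 0 < m) (hC₂ : 0 < C₂)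
    (v : EuclideanSpace ℝ (Fin 2) → ℝ)
    (hC2 : ContDiffOn ℝ 2 v {x | R₀ ≤ ‖x‖})
    (hlim : Tendsto v (comap (fun x : EuclideanSpace ℝ (Fin 2) => ‖x‖) atTop) (nhds 0))
    (herr : ∀ x, R₀ ≤ ‖x‖ → |lap2 v x - v x| ≤ C₂ * Real.exp (-2 * m * ‖x‖)) :
    ∀ β, m < β → β < min 1 (2 * m) →
      ∃ C₃ > (0:ℝ), ∀ x, R₀ ≤ ‖x‖ → |v x| ≤ C₃ * Real.exp (-β * ‖x‖) := by
  intro β hmβ hβ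
  rw [comap_norm_atTop, Metric.cobounded_eq_cocompact] at hlim
  refine exists_abs_le_mul_exp_of_abs_laplacian_sub_le (γ := 2 * m) hC2 hlim
    (fun x hx => ?_) hC₂.le (hm0.trans hmβ).le (hβ.trans_le (min_le_left _ _))
    (hβ.trans_le (min_le_right _ _)).le
  simpa only [lap2_eq_laplacian, neg_mul] using herr x hx

/-- Bootstrap step: if `v → 0` at infinity and `|Δv − v| ≤ C₂ e^{−2m|x|}` on `{|x| ≥ R₀}`
with `0 < m < 1`, then for every `β ∈ (m, min{1, 2m})` one has `|v| ≤ C₃ e^{−β|x|}`. -/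
theorem stmt_4 (R₀ m C₂ : ℝ) (hR₀ : 1 ≤ R₀) (hm0 : 0 < m) (hm1 : m < 1) (hC₂ : 0 < C₂)
    (v : EuclideanSpace ℝ (Fin 2) → ℝ)
    (hC2 : ContDiffOn ℝ 2 v {x | R₀ ≤ ‖x‖})
    (hlim : Tendsto v (comap (fun x : EuclideanSpace ℝ (Fin 2) => ‖x‖) atTop) (nhds 0))
    (herr : ∀ x, R₀ ≤ ‖x‖ → |lap2 v x - v x| ≤ C₂ * Real.exp (-2 * m * ‖x‖)) :
    ∀ β, m < β → β < min 1 (2 * m) →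
      ∃ C₃ > (0:ℝ), ∀ x, R₀ ≤ ‖x‖ → |v x| ≤ C₃ * Real.exp (-β * ‖x‖) :=
  stmt_4_general R₀ m C₂ hm0 hC₂ v hC2 hlim herr
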